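/- The Chow–Gessel type B q-Stirling numbers S_{n,k}(q), defined by S_{n,k}(q) = q^{2k-1}(1+q)·S_{n-1,k-1}(q) + [2k+1]_q·S_{n-1,k}(q) with S_{n,0}(q)=1 for all n ≥ 0, satisfy S_{n,k}(q) = (1+q)^k · q^{k^2} · S_B[n,k] for all 0 ≤ k ≤ n. -/
import Mathlib


open Finset Polynomial

/-- `[m]_q = 1 + q + ... + q^{m-1}`. -/
def qnat {R : Type*} [CommRing R] (q : R) (m : ℕ) : R := ∑ i ∈ Finset.range m, q ^ i

/-- The type B q-Stirling numbers of the second kind: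
`S_B[n,k] = S_B[n-1,k-1] + [2k+1]_q S_B[n-1,k]`, `S_B[0,k] = δ_{0k}`. -/
noncomputable def qStirB : ℕ → ℕ → Polynomial ℤ
  | 0, 0 => 1
  | 0, _ + 1 => 0
  | n + 1, 0 => qnat X 1 * qStirB n 0
  | n + 1, k + 1 => qStirB n k + qnat X (2 * (k + 1) + 1) * qStirB n (k + 1)

/-- The Chow–Gessel type B q-Stirling numbers:
`S_{n,k}(q) = q^{2k-1}(1+q) S_{n-1,k-1}(q) + [2k+1]_q S_{n-1,k}(q)` with `S_{n,0}(q) = 1`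
(and `S_{0,k}(q) = 0` for `k ≥ 1`). -/
noncomputable def chowGessel : ℕ → ℕ → Polynomial ℤ
  | _, 0 => 1
  | 0, _ + 1 => 0
  | n + 1, k + 1 =>
      X ^ (2 * (k + 1) - 1) * (1 + X) * chowGessel n k
        + qnat X (2 * (k + 1) + 1) * chowGessel n (k + 1)


lemma qnat_one' : qnat (X : Polynomial ℤ) 1 = 1 := by simp [qnat]

lemma qStirB_zero (n : ℕ) : qStirB n 0 = 1 := by
  induction n with
  | zero => rfl
  | succ n ih => rw [qStirB, qnat_one', ih, one_mul]

lemma chowGessel_key (n k : ℕ) : chowGessel n k = (1 + X) ^ k * X ^ (k ^ 2) * qStirB n k := by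
  induction n generalizing k with
  | zero =>
    cases k with
    | zero => simp [chowGessel, qStirB]
    | succ k => simp [chowGessel, qStirB]
  | succ n ih =>
    cases k with
    | zero => simp [chowGessel, qStirB_zero]
    | succ k =>
      rw [chowGessel, qStirB, ih k, ih (k+1)]
      have h1 : (k+1)^2 = k^2 + (2*(k+1)-1) := by ring_nf; omega
      rw [h1, pow_add]
      ring

theorem stmt4 (n k : ℕ) (h : k ≤ n) :
    chowGessel n k = (1 + X) ^ k * X ^ (k ^ 2) * qStirB n k := by
  exact chowGessel_key n k
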